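/- If G is a nonempty finite simple graph in which every vertex has degree at least 2 and whose cyclomatic number is k, then G has at most 2k − 2 vertices of degree at least 3. -/

import Mathlib

open SimpleGraph

/-- The cyclomatic number m − n + c of a finite simple graph, as an integer. -/
noncomputable def cyclomaticNumber (V : Type) [Fintype V] (G : SimpleGraph V) : ℤ :=
  (Nat.card G.edgeSet : ℤ) - (Fintype.card V : ℤ) + (Nat.card G.ConnectedComponent : ℤ)

/-- `b` lies strictly between `a` and `c`. -/
def StrictBtw (a b c : ℕ) : Prop := (a < b ∧ b < c) ∨ (c < b ∧ b < a)

/-- Two edges cross in the 1-page drawing given by the vertex order `f`: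
they have four distinct endpoints `u v x y` with exactly one of `x`, `y`
strictly between `u` and `v`. -/
def Cross1 {V : Type} (f : V ↪ ℕ) (e₁ e₂ : Sym2 V) : Prop :=
  ∃ u v x y : V, e₁ = s(u, v) ∧ e₂ = s(x, y) ∧
    u ≠ v ∧ u ≠ x ∧ u ≠ y ∧ v ≠ x ∧ v ≠ y ∧ x ≠ y ∧
    Xor' (StrictBtw (f u) (f x) (f v)) (StrictBtw (f u) (f y) (f v))

/-- Number of unordered pairs of edges of `G` crossing in the 1-page drawing `f`. -/
noncomputable def numCross1 {V : Type} (G : SimpleGraph V) (f : V ↪ ℕ) : ℕ :=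
  Nat.card {P : Set (Sym2 V) // ∃ e₁ e₂, e₁ ∈ G.edgeSet ∧ e₂ ∈ G.edgeSet ∧
    P = {e₁, e₂} ∧ Cross1 f e₁ e₂}

/-- Number of edges of `G` crossing at least one other edge in the 1-page drawing `f`. -/
noncomputable def numCrossedEdges1 {V : Type} (G : SimpleGraph V) (f : V ↪ ℕ) : ℕ :=
  Nat.card {e : Sym2 V // e ∈ G.edgeSet ∧ ∃ e' ∈ G.edgeSet, Cross1 f e e'}

/-- The 1-page book crossing number. -/
noncomputable def cr1 {V : Type} (G : SimpleGraph V) : ℕ := ⨅ f : V ↪ ℕ, numCross1 G f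

/-- The 1-page crossed-edge number. -/
noncomputable def ce1 {V : Type} (G : SimpleGraph V) : ℕ := ⨅ f : V ↪ ℕ, numCrossedEdges1 G f

/-- Two edges cross in the 2-page drawing `(f, σ)`: same page and 1-page crossing. -/
def Cross2 {V : Type} (f : V ↪ ℕ) (σ : Sym2 V → Bool) (e₁ e₂ : Sym2 V) : Prop :=
  σ e₁ = σ e₂ ∧ Cross1 f e₁ e₂

/-- Number of unordered pairs of edges of `G` crossing in the 2-page drawing `(f, σ)`. -/
noncomputable def numCross2 {V : Type} (G : SimpleGraph V) (f : V ↪ ℕ) (σ : Sym2 V → Bool) : ℕ :=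
  Nat.card {P : Set (Sym2 V) // ∃ e₁ e₂, e₁ ∈ G.edgeSet ∧ e₂ ∈ G.edgeSet ∧
    P = {e₁, e₂} ∧ Cross2 f σ e₁ e₂}

/-- Number of edges of `G` crossing at least one other edge in the 2-page drawing `(f, σ)`. -/
noncomputable def numCrossedEdges2 {V : Type} (G : SimpleGraph V) (f : V ↪ ℕ)
    (σ : Sym2 V → Bool) : ℕ :=
  Nat.card {e : Sym2 V // e ∈ G.edgeSet ∧ ∃ e' ∈ G.edgeSet, Cross2 f σ e e'}

/-- The 2-page book crossing number. -/
noncomputable def cr2 {V : Type} (G : SimpleGraph V) : ℕ :=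
  ⨅ f : V ↪ ℕ, ⨅ σ : Sym2 V → Bool, numCross2 G f σ

/-- The 2-page crossed-edge number. -/
noncomputable def ce2 {V : Type} (G : SimpleGraph V) : ℕ :=
  ⨅ f : V ↪ ℕ, ⨅ σ : Sym2 V → Bool, numCrossedEdges2 G f σ

/-- The graph obtained from `G` by subdividing the edge `uv`: the edge `uv` is
deleted and a new vertex `none` is joined to `u` and `v`. -/
def subdivide {V : Type} (G : SimpleGraph V) (u v : V) : SimpleGraph (Option V) where
  Adj a b :=
    (∃ x y : V, a = some x ∧ b = some y ∧ G.Adj x y ∧ ¬(x = u ∧ y = v) ∧ ¬(x = v ∧ y = u)) ∨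
    (a = none ∧ (b = some u ∨ b = some v)) ∨
    (b = none ∧ (a = some u ∨ a = some v))
  symm.symm a b h := by
    rcases h with ⟨x, y, ha, hb, hxy, h1, h2⟩ | h | h
    · exact Or.inl ⟨y, x, hb, ha, hxy.symm, fun ⟨p, q⟩ => h2 ⟨q, p⟩, fun ⟨p, q⟩ => h1 ⟨q, p⟩⟩
    · exact Or.inr (Or.inr h)
    · exact Or.inr (Or.inl h)
  loopless.irrefl a h := by
    rcases h with ⟨x, y, ha, hb, hxy, _, _⟩ | ⟨h1, h2 | h2⟩ | ⟨h1, h2 | h2⟩ <;>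
      simp_all [G.loopless]

/-- The graph obtained from `G` by contracting the edge `uv`: `v` is removed and
the merged vertex `u` becomes adjacent to every other former neighbor of `u` or `v`. -/
def contractEdge {V : Type} (G : SimpleGraph V) (u v : V) : SimpleGraph {x : V // x ≠ v} where
  Adj a b := a ≠ b ∧
    (G.Adj a.1 b.1 ∨ (a.1 = u ∧ G.Adj v b.1) ∨ (b.1 = u ∧ G.Adj a.1 v))
  symm.symm a b h := by
    obtain ⟨hne, h⟩ := h
    refine ⟨hne.symm, ?_⟩
    rcases h with h | ⟨h1, h2⟩ | ⟨h1, h2⟩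
    · exact Or.inl h.symm
    · exact Or.inr (Or.inr ⟨h1, h2.symm⟩)
    · exact Or.inr (Or.inl ⟨h1, h2.symm⟩)
  loopless.irrefl a h := h.1 rfl

namespace SimpleGraph

variable {V : Type} [Fintype V] (G : SimpleGraph V) [DecidableRel G.Adj]

theorem sum_degrees_eq_two_mul_natCard_edgeSet :
    ∑ v, G.degree v = 2 * Nat.card G.edgeSet := by
  classical
  rw [sum_degrees_eq_twice_card_edges, edgeFinset_card, Nat.card_eq_fintype_card]

theorem two_mul_card_add_card_filter_three_le_degree_le_sum_degrees
    (hdeg : ∀ v, 2 ≤ G.degree v) :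
    2 * Fintype.card V + (Finset.univ.filter fun v => 3 ≤ G.degree v).card ≤
      ∑ v, G.degree v := by
  rw [Finset.card_filter, ← Finset.card_univ, Finset.card_eq_sum_ones, Finset.mul_sum,
    ← Finset.sum_add_distrib]
  refine Finset.sum_le_sum fun v _ => ?_
  have := hdeg v
  split_ifs <;> omega

theorem card_filter_three_le_degree_le_of_two_le_degree (hdeg : ∀ v, 2 ≤ G.degree v) :
    ((Finset.univ.filter fun v => 3 ≤ G.degree v).card : ℤ) ≤
      2 * ((Nat.card G.edgeSet : ℤ) - Fintype.card V) := by
  have := G.two_mul_card_add_card_filter_three_le_degree_le_sum_degrees hdeg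
  rw [sum_degrees_eq_two_mul_natCard_edgeSet] at this
  omega

end SimpleGraph

theorem stmt3_general {V : Type} [Fintype V] [Nonempty V]
    (G : SimpleGraph V) [DecidableRel G.Adj] (k : ℕ)
    (hk : cyclomaticNumber V G = (k : ℤ))
    (hdeg : ∀ v : V, 2 ≤ G.degree v) :
    ((Finset.univ.filter fun v : V => 3 ≤ G.degree v).card : ℤ) ≤ 2 * (k : ℤ) - 2 := by
  have hcomponents : 1 ≤ Nat.card G.ConnectedComponent := Nat.card_pos
  have hbranch := G.card_filter_three_le_degree_le_of_two_le_degree hdeg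
  unfold cyclomaticNumber at hk
  omega

/-- If `G` is a nonempty finite simple graph in which every vertex has
degree at least 2 and whose cyclomatic number is `k`, then `G` has at most `2k - 2`
vertices of degree at least 3. -/
theorem stmt3 {V : Type} [Fintype V] [DecidableEq V] [Nonempty V]
    (G : SimpleGraph V) [DecidableRel G.Adj] (k : ℕ)
    (hk : cyclomaticNumber V G = (k : ℤ))
    (hdeg : ∀ v : V, 2 ≤ G.degree v) :
    ((Finset.univ.filter fun v : V => 3 ≤ G.degree v).card : ℤ) ≤ 2 * (k : ℤ) - 2 :=
  stmt3_general G k hk hdeg
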